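/- Let K ⊂ ℝ³ be a centrally symmetric convex body which is strongly convex with smooth boundary (K ∈ 𝒦̂), and put L = X(π − Θ(K))K. Then Θ(L) = π − Θ(K), Φ(L) = π − Ψ(K), and Ψ(L) = Φ(K). -/

import Mathlib

open MeasureTheory Real Set
open scoped RealInnerProductSpace

noncomputable section

/-- Euclidean 3-space. -/
abbrev E3 := EuclideanSpace ℝ (Fin 3)

/-- The point `(a, b, c)` of `ℝ³`. -/
def pt (a b c : ℝ) : E3 := (WithLp.equiv 2 (Fin 3 → ℝ)).symm ![a, b, c]

/-- The polar body `K° = {y : ⟪x, y⟫ ≤ 1 for all x ∈ K}`. -/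
def polarBody (K : Set E3) : Set E3 := {y : E3 | ∀ x ∈ K, ⟪x, y⟫ ≤ 1}

/-- The radial function `ρ_K(x) = max {t ≥ 0 : t • x ∈ K}`. -/
def radial (K : Set E3) (x : E3) : ℝ := sSup {t : ℝ | 0 ≤ t ∧ t • x ∈ K}

/-- The spherical parametrization `P(α, β)`. -/
def sphP (α β : ℝ) : E3 := pt (cos α) (sin α * cos β) (sin α * sin β)

/-- Rotation by angle `θ` about the `x`-axis. -/
def rotX (θ : ℝ) (p : E3) : E3 :=
  pt (p 0) (cos θ * p 1 - sin θ * p 2) (sin θ * p 1 + cos θ * p 2)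

/-- Rotation by angle `φ` about the `y`-axis. -/
def rotY (φ : ℝ) (p : E3) : E3 :=
  pt (cos φ * p 0 + sin φ * p 2) (p 1) (-sin φ * p 0 + cos φ * p 2)

/-- Rotation by angle `ψ` about the `z`-axis. -/
def rotZ (ψ : ℝ) (p : E3) : E3 :=
  pt (cos ψ * p 0 - sin ψ * p 1) (sin ψ * p 0 + cos ψ * p 1) (p 2)

/-- `K ∈ 𝒦̂`: a centrally symmetric convex body in `ℝ³` which is strongly convex with
smooth boundary, i.e. `h_K = gauge²/2` is `C^∞` away from the origin and has positive
definite Hessian at every point of the unit sphere. -/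
def IsKhat (K : Set E3) : Prop :=
  IsCompact K ∧ Convex ℝ K ∧ (interior K).Nonempty ∧ K = -K ∧
    ContDiffOn ℝ (⊤ : ℕ∞) (fun x => gauge K x ^ 2 / 2) {0}ᶜ ∧
    ∀ x : E3, ‖x‖ = 1 → ∀ v : E3, v ≠ 0 →
      0 < fderiv ℝ (fderiv ℝ (fun y => gauge K y ^ 2 / 2)) x v v

/-- `Θ` satisfies the defining property of `Θ(K)`. -/
def ThetaEq (K : Set E3) (Θ : ℝ) : Prop :=
  Θ ∈ Ioo 0 π ∧
    ∫ β in (0:ℝ)..Θ, ∫ α in (0:ℝ)..π, radial K (sphP α β) ^ 3 * sin α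
      = ∫ β in Θ..π, ∫ α in (0:ℝ)..π, radial K (sphP α β) ^ 3 * sin α

/-- `Φ` satisfies the defining property of `Φ(K)`. -/
def PhiEq (K : Set E3) (Φ : ℝ) : Prop :=
  Φ ∈ Ioo 0 π ∧
    ∫ α in (0:ℝ)..Φ, radial K (sphP α 0) ^ 2 = ∫ α in Φ..π, radial K (sphP α 0) ^ 2

/-- `Ψ` satisfies the defining property of `Ψ(K)`, where `Θ = Θ(K)`. -/
def PsiEq (K : Set E3) (Θ Ψ : ℝ) : Prop :=
  Ψ ∈ Ioo 0 π ∧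
    ∫ α in (0:ℝ)..Ψ, radial K (sphP α Θ) ^ 2 = ∫ α in Ψ..π, radial K (sphP α Θ) ^ 2

/-- The unitriangular map whose inverse is the matrix `𝒜(K)` (for `Θ = Θ(K)`, `Φ = Φ(K)`,
`Ψ = Ψ(K)`); thus the body `𝒜(K) K` is the preimage `shear Θ Φ Ψ ⁻¹' K`. -/
def shear (Θ Φ Ψ : ℝ) (p : E3) : E3 :=
  pt (p 0 + p 1 / tan Φ + p 2 / (sin Θ * tan Ψ)) (p 1 + p 2 / tan Θ) (p 2)

/-- `v₁ = vol(L ∩ {x ≥ 0, y ≥ 0, z ≥ 0})`. -/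
def vol₁ (L : Set E3) : ℝ := (volume (L ∩ {p : E3 | 0 ≤ p 0 ∧ 0 ≤ p 1 ∧ 0 ≤ p 2})).toReal

/-- `v₂ = vol(L ∩ {x ≤ 0, y ≥ 0, z ≥ 0})`. -/
def vol₂ (L : Set E3) : ℝ := (volume (L ∩ {p : E3 | p 0 ≤ 0 ∧ 0 ≤ p 1 ∧ 0 ≤ p 2})).toReal

/-- `v₃ = vol(L ∩ {x ≤ 0, y ≤ 0, z ≥ 0})`. -/
def vol₃ (L : Set E3) : ℝ := (volume (L ∩ {p : E3 | p 0 ≤ 0 ∧ p 1 ≤ 0 ∧ 0 ≤ p 2})).toReal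

/-- `v₄ = vol(L ∩ {x ≥ 0, y ≤ 0, z ≥ 0})`. -/
def vol₄ (L : Set E3) : ℝ := (volume (L ∩ {p : E3 | 0 ≤ p 0 ∧ p 1 ≤ 0 ∧ 0 ≤ p 2})).toReal

/-- `F` applied to the transformed body `L' = 𝒜(K) K`. -/
def Ffun (L : Set E3) : ℝ :=
  (μH[2] (L ∩ {p : E3 | p 0 = 0 ∧ 0 ≤ p 1 ∧ 0 ≤ p 2})).toReal -
    (μH[2] (L ∩ {p : E3 | p 0 = 0 ∧ p 1 ≤ 0 ∧ 0 ≤ p 2})).toReal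

/-- `G = v₁ + v₃ - v₂ - v₄` applied to the transformed body `L' = 𝒜(K) K`. -/
def Gfun (L : Set E3) : ℝ := vol₁ L + vol₃ L - vol₂ L - vol₄ L

/-- `H = v₁ + v₄ - v₂ - v₃` applied to the transformed body `L' = 𝒜(K) K`. -/
def Hfun (L : Set E3) : ℝ := vol₁ L + vol₄ L - vol₂ L - vol₃ L

/-- Condition (★). -/
def StarCond (K : Set E3) : Prop :=
  volume (K ∩ {p : E3 | 0 ≤ p 0 ∧ 0 ≤ p 1 ∧ 0 ≤ p 2})
      = volume (K ∩ {p : E3 | p 0 ≤ 0 ∧ 0 ≤ p 1 ∧ 0 ≤ p 2}) ∧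
    volume (K ∩ {p : E3 | p 0 ≤ 0 ∧ 0 ≤ p 1 ∧ 0 ≤ p 2})
      = volume (K ∩ {p : E3 | p 0 ≤ 0 ∧ p 1 ≤ 0 ∧ 0 ≤ p 2}) ∧
    volume (K ∩ {p : E3 | p 0 ≤ 0 ∧ p 1 ≤ 0 ∧ 0 ≤ p 2})
      = volume (K ∩ {p : E3 | 0 ≤ p 0 ∧ p 1 ≤ 0 ∧ 0 ≤ p 2}) ∧
    μH[2] (K ∩ {p : E3 | p 0 = 0 ∧ 0 ≤ p 1 ∧ 0 ≤ p 2})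
      = μH[2] (K ∩ {p : E3 | p 0 = 0 ∧ p 1 ≤ 0 ∧ 0 ≤ p 2}) ∧
    μH[2] (K ∩ {p : E3 | p 1 = 0 ∧ 0 ≤ p 0 ∧ 0 ≤ p 2})
      = μH[2] (K ∩ {p : E3 | p 1 = 0 ∧ 0 ≤ p 0 ∧ p 2 ≤ 0}) ∧
    μH[2] (K ∩ {p : E3 | p 2 = 0 ∧ 0 ≤ p 0 ∧ 0 ≤ p 1})
      = μH[2] (K ∩ {p : E3 | p 2 = 0 ∧ p 0 ≤ 0 ∧ 0 ≤ p 1})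

/-- The cube `[-1,1]³`. -/
def cube : Set E3 := {x : E3 | ∀ i, x i ∈ Icc (-1:ℝ) 1}

/-- The cross product on `ℝ³`. -/
def cross (a b : E3) : E3 :=
  pt (a 1 * b 2 - a 2 * b 1) (a 2 * b 0 - a 0 * b 2) (a 0 * b 1 - a 1 * b 0)

/-!
Rotating by `X(π − Θ)` shifts the longitude `β` by `Θ − π`, and the central symmetry of `K`
gives `ρ_K(P(α, β − π)) = ρ_K(P(π − α, β))`. Hence the `Θ`-integrand of `L` is the `π`-periodic
`Θ`-integrand of `K` translated by `Θ`, the meridian of `L` at `β = 0` is the meridian of `K` at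
`β = Θ` run backwards, and the meridian of `L` at `β = π − Θ` is the meridian of `K` at `β = 0`.
Each of `Θ`, `Φ`, `Ψ` bisects the integral over `[0, π]` of a continuous positive function, so
it is unique, and translating or reflecting the function moves the bisector accordingly.
-/

open scoped Topology

def IsBisector (f : ℝ → ℝ) (a b s : ℝ) : Prop :=
  ∫ x in a..s, f x = ∫ x in s..b, f x

namespace IsBisector

variable {f : ℝ → ℝ} {a b s : ℝ}

theorem unique (hf : Continuous f) (hpos : ∀ x, 0 < f x) {t : ℝ}
    (hs : IsBisector f a b s) (ht : IsBisector f a b t) : s = t := by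
  have hint : ∀ u v : ℝ, IntervalIntegrable f volume u v := hf.intervalIntegrable
  have hmono : StrictMono fun u => ∫ x in a..u, f x := fun u v huv => by
    have hpos_uv : 0 < ∫ x in u..v, f x :=
      intervalIntegral.intervalIntegral_pos_of_pos_on (hint u v) (fun x _ => hpos x) huv
    have := intervalIntegral.integral_add_adjacent_intervals (hint a u) (hint u v)
    linarith
  refine hmono.injective ?_
  have hs' := intervalIntegral.integral_add_adjacent_intervals (hint a s) (hint s b)
  have ht' := intervalIntegral.integral_add_adjacent_intervals (hint a t) (hint t b)
  unfold IsBisector at hs ht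
  linarith

theorem comp_sub_left (hs : IsBisector f a b s) :
    IsBisector (fun x => f (a + b - x)) a b (a + b - s) := by
  unfold IsBisector at hs ⊢
  rw [intervalIntegral.integral_comp_sub_left, intervalIntegral.integral_comp_sub_left]
  rw [show a + b - (a + b - s) = s by ring, show a + b - a = b by ring,
    show a + b - b = a by ring]
  exact hs.symm

theorem comp_add_right_of_periodic (hper : Function.Periodic f (b - a))
    (hs : IsBisector f a b s) :
    IsBisector (fun x => f (x + (s - a))) a b (a + b - s) := by
  unfold IsBisector at hs ⊢
  have hshift : ∫ x in b..b + (s - a), f x = ∫ x in a..s, f x := by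
    have h := intervalIntegral.integral_comp_add_right f (a := a) (b := s) (b - a)
    simp only [show ∀ x, f (x + (b - a)) = f x from hper] at h
    rw [h, show a + (b - a) = b by ring, show s + (b - a) = b + (s - a) by ring]
  rw [intervalIntegral.integral_comp_add_right, intervalIntegral.integral_comp_add_right,
    show a + (s - a) = s by ring, show a + b - s + (s - a) = b by ring, hshift]
  exact hs.symm

end IsBisector


theorem ext_E3 {p q : E3} (h0 : p 0 = q 0) (h1 : p 1 = q 1) (h2 : p 2 = q 2) : p = q :=
  PiLp.ext fun i => by fin_cases i <;> assumption

@[simp] theorem pt_apply_zero (a b c : ℝ) : pt a b c 0 = a := rfl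
@[simp] theorem pt_apply_one (a b c : ℝ) : pt a b c 1 = b := rfl
@[simp] theorem pt_apply_two (a b c : ℝ) : pt a b c 2 = c := rfl

theorem norm_sphP (α β : ℝ) : ‖sphP α β‖ = 1 := by
  rw [EuclideanSpace.norm_eq, Fin.sum_univ_three]
  simp only [sphP, pt_apply_zero, pt_apply_one, pt_apply_two, Real.norm_eq_abs, sq_abs]
  rw [show cos α ^ 2 + (sin α * cos β) ^ 2 + (sin α * sin β) ^ 2 = 1 by
    linear_combination sin α ^ 2 * sin_sq_add_cos_sq β + cos_sq_add_sin_sq α, sqrt_one]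

theorem sphP_ne_zero (α β : ℝ) : sphP α β ≠ 0 :=
  norm_ne_zero_iff.1 (by rw [norm_sphP]; exact one_ne_zero)

theorem continuous_sphP : Continuous fun p : ℝ × ℝ => sphP p.1 p.2 := by
  refine (PiLp.continuous_toLp 2 _).comp (continuous_pi fun i => ?_)
  fin_cases i <;> simp only [Fin.zero_eta, Fin.mk_one, Fin.reduceFinMk, Matrix.cons_val] <;>
    fun_prop

theorem sphP_sub_pi (α β : ℝ) : sphP α (β - π) = -sphP (π - α) β := by
  apply ext_E3 <;> simp [sphP, cos_pi_sub, sin_pi_sub, cos_sub_pi, sin_sub_pi]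

theorem rotX_sphP (θ α β : ℝ) : rotX θ (sphP α β) = sphP α (β + θ) := by
  apply ext_E3 <;>
    simp only [rotX, sphP, pt_apply_zero, pt_apply_one, pt_apply_two, cos_add, sin_add] <;> ring

theorem rotX_smul (θ t : ℝ) (p : E3) : rotX θ (t • p) = t • rotX θ p := by
  apply ext_E3 <;>
    simp only [rotX, PiLp.smul_apply, smul_eq_mul, pt_apply_zero, pt_apply_one, pt_apply_two] <;> ring

theorem rotX_neg_rotX (θ : ℝ) (p : E3) : rotX (-θ) (rotX θ p) = p := by
  apply ext_E3
  · simp [rotX]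
  · simp only [rotX, pt_apply_one, pt_apply_two, cos_neg, sin_neg]
    linear_combination p 1 * sin_sq_add_cos_sq θ
  · simp only [rotX, pt_apply_one, pt_apply_two, cos_neg, sin_neg]
    linear_combination p 2 * sin_sq_add_cos_sq θ

theorem rotX_injective (θ : ℝ) : Function.Injective (rotX θ) :=
  Function.LeftInverse.injective (g := rotX (-θ)) (rotX_neg_rotX θ)

section Radial

variable {K : Set E3}

theorem radial_image {f : E3 → E3} (hf : Function.Injective f)
    (hsmul : ∀ (t : ℝ) x, f (t • x) = t • f x) (x : E3) :
    radial (f '' K) (f x) = radial K x := by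
  simp only [radial, ← hsmul, hf.mem_set_image]

theorem radial_neg (hsym : K = -K) (x : E3) : radial K (-x) = radial K x := by
  conv_rhs => rw [hsym]
  simp only [radial, Set.mem_neg, smul_neg]

theorem mem_nhds_zero_of_neg_eq (hconv : Convex ℝ K) (hne : (interior K).Nonempty)
    (hsym : K = -K) : K ∈ 𝓝 (0 : E3) := by
  obtain ⟨x, hx⟩ := hne
  have hx' : -x ∈ interior K := by
    rw [hsym] at hx
    rwa [show -K = (Homeomorph.neg E3) ⁻¹' K from rfl, ← Homeomorph.preimage_interior] at hx
  have hmid := hconv.interior hx hx' (by norm_num : (0:ℝ) ≤ 1/2) (by norm_num : (0:ℝ) ≤ 1/2)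
    (by norm_num)
  rw [← mem_interior_iff_mem_nhds]
  simpa using hmid

theorem gauge_pos_of_ne_zero (hcomp : IsCompact K) (hK0 : K ∈ 𝓝 0) {x : E3} (hx : x ≠ 0) :
    0 < gauge K x :=
  (gauge_pos (absorbent_nhds_zero hK0) ((NormedSpace.isVonNBounded_iff ℝ).2 hcomp.isBounded)).2 hx

theorem radial_eq_inv_gauge (hcomp : IsCompact K) (hconv : Convex ℝ K) (hK0 : K ∈ 𝓝 0)
    {x : E3} (hx : x ≠ 0) : radial K x = (gauge K x)⁻¹ := by
  have hmem : ∀ y, y ∈ K ↔ gauge K y ≤ 1 := fun y => by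
    rw [gauge_le_one_iff_mem_closure hconv hK0, hcomp.isClosed.closure_eq]
  have hray : {t : ℝ | 0 ≤ t ∧ t • x ∈ K} = Icc 0 (gauge K x)⁻¹ := by
    ext t
    simp only [mem_ofPred_eq, mem_Icc, hmem, and_congr_right_iff]
    intro ht
    rw [gauge_smul_of_nonneg ht, smul_eq_mul,
      ← one_div, le_div_iff₀ (gauge_pos_of_ne_zero hcomp hK0 hx)]
  rw [radial, hray, csSup_Icc (inv_nonneg.2 (gauge_nonneg x))]

theorem radial_pos (hcomp : IsCompact K) (hconv : Convex ℝ K) (hK0 : K ∈ 𝓝 0)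
    {x : E3} (hx : x ≠ 0) : 0 < radial K x := by
  rw [radial_eq_inv_gauge hcomp hconv hK0 hx]
  exact inv_pos.2 (gauge_pos_of_ne_zero hcomp hK0 hx)

theorem continuousOn_radial (hcomp : IsCompact K) (hconv : Convex ℝ K) (hK0 : K ∈ 𝓝 0) :
    ContinuousOn (radial K) {0}ᶜ :=
  ((continuous_gauge hconv hK0).continuousOn.inv₀ fun _ hx =>
      (gauge_pos_of_ne_zero hcomp hK0 hx).ne').congr
    fun _ hx => radial_eq_inv_gauge hcomp hconv hK0 hx

end Radial

section Spherical

variable {K : Set E3}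

theorem radial_image_rotX_sphP (θ α β : ℝ) :
    radial (rotX θ '' K) (sphP α β) = radial K (sphP α (β - θ)) := by
  rw [← radial_image (rotX_injective θ) (rotX_smul θ) (sphP α (β - θ)), rotX_sphP,
    sub_add_cancel]

theorem radial_sphP_sub_pi (hsym : K = -K) (α β : ℝ) :
    radial K (sphP α (β - π)) = radial K (sphP (π - α) β) := by
  rw [sphP_sub_pi, radial_neg hsym]

theorem continuous_radial_sphP (hcomp : IsCompact K) (hconv : Convex ℝ K) (hK0 : K ∈ 𝓝 0)
    {X : Type*} [TopologicalSpace X] {f g : X → ℝ} (hf : Continuous f) (hg : Continuous g) :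
    Continuous fun x => radial K (sphP (f x) (g x)) :=
  (continuousOn_radial hcomp hconv hK0).comp_continuous (continuous_sphP.comp₂ hf hg)
    fun x => mem_compl_singleton_iff.2 (sphP_ne_zero (f x) (g x))

/-- The inner integral in the definition of `Θ(K)`; thus `ThetaEq K Θ` unfolds to
`Θ ∈ Ioo 0 π ∧ IsBisector (wedgeDensity K) 0 π Θ`, and likewise `PhiEq` and `PsiEq` are
bisector conditions for `α ↦ ρ_K(P(α, β))²` with `β = 0` and `β = Θ`. -/
def wedgeDensity (K : Set E3) (β : ℝ) : ℝ :=
  ∫ α in (0:ℝ)..π, radial K (sphP α β) ^ 3 * sin α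

theorem wedgeDensity_image_rotX (θ β : ℝ) :
    wedgeDensity (rotX θ '' K) β = wedgeDensity K (β - θ) := by
  simp only [wedgeDensity, radial_image_rotX_sphP]

theorem wedgeDensity_sub_pi (hsym : K = -K) (β : ℝ) :
    wedgeDensity K (β - π) = wedgeDensity K β := by
  simp only [wedgeDensity, radial_sphP_sub_pi hsym]
  have h := intervalIntegral.integral_comp_sub_left
    (fun α => radial K (sphP α β) ^ 3 * sin α) (a := 0) (b := π) π
  simpa only [sin_pi_sub, sub_self, sub_zero] using h

theorem periodic_wedgeDensity (hsym : K = -K) : Function.Periodic (wedgeDensity K) π :=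
  fun β => by simpa using (wedgeDensity_sub_pi hsym (β + π)).symm

theorem continuous_wedgeDensity (hcomp : IsCompact K) (hconv : Convex ℝ K) (hK0 : K ∈ 𝓝 0) :
    Continuous (wedgeDensity K) :=
  intervalIntegral.continuous_parametric_intervalIntegral_of_continuous'
    ((continuous_radial_sphP hcomp hconv hK0 continuous_snd continuous_fst).pow 3 |>.mul
      (continuous_sin.comp continuous_snd)) 0 π

theorem wedgeDensity_pos (hcomp : IsCompact K) (hconv : Convex ℝ K) (hK0 : K ∈ 𝓝 0) (β : ℝ) :
    0 < wedgeDensity K β := by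
  refine intervalIntegral.intervalIntegral_pos_of_pos_on ?_ (fun α hα => ?_) pi_pos
  · exact ((continuous_radial_sphP hcomp hconv hK0 continuous_id continuous_const).pow 3
      |>.mul continuous_sin).intervalIntegrable 0 π
  · exact mul_pos (pow_pos (radial_pos hcomp hconv hK0 (sphP_ne_zero α β)) 3)
      (sin_pos_of_pos_of_lt_pi hα.1 hα.2)

theorem wedgeDensity_image_rotX_pi_sub (hsym : K = -K) (Θ β : ℝ) :
    wedgeDensity (rotX (π - Θ) '' K) β = wedgeDensity K (β + Θ) := by
  rw [wedgeDensity_image_rotX, show β - (π - Θ) = β + Θ - π by ring,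
    (periodic_wedgeDensity hsym).sub_eq]

theorem IsBisector.wedgeDensity_add (hsym : K = -K) {Θ : ℝ}
    (hΘ : IsBisector (wedgeDensity K) 0 π Θ) :
    IsBisector (fun β => wedgeDensity K (β + Θ)) 0 π (π - Θ) := by
  simpa using hΘ.comp_add_right_of_periodic (by simpa using periodic_wedgeDensity hsym)

end Spherical

/-- Lemma 5.5: for `K ∈ 𝒦̂` and `L = X(π − Θ(K))K` one has `Θ(L) = π − Θ(K)`,
`Φ(L) = π − Ψ(K)` and `Ψ(L) = Φ(K)`. -/
theorem theta_phi_psi_rotX (K : Set E3) (hK : IsKhat K)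
    (Θ Φ Ψ : ℝ) (hΘ : ThetaEq K Θ) (hΦ : PhiEq K Φ) (hΨ : PsiEq K Θ Ψ)
    (Θ' Φ' Ψ' : ℝ)
    (hΘ' : ThetaEq (rotX (π - Θ) '' K) Θ')
    (hΦ' : PhiEq (rotX (π - Θ) '' K) Φ')
    (hΨ' : PsiEq (rotX (π - Θ) '' K) Θ' Ψ') :
    Θ' = π - Θ ∧ Φ' = π - Ψ ∧ Ψ' = Φ := by
  obtain ⟨hcomp, hconv, hne, hsym, -, -⟩ := hK
  have hK0 := mem_nhds_zero_of_neg_eq hconv hne hsym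
  have hρ_pos := fun α β => radial_pos hcomp hconv hK0 (sphP_ne_zero α β)
  have hΘ_eq : Θ' = π - Θ := by
    have hL : IsBisector (wedgeDensity (rotX (π - Θ) '' K)) 0 π Θ' := hΘ'.2
    simp only [IsBisector, wedgeDensity_image_rotX_pi_sub hsym] at hL
    exact IsBisector.unique ((continuous_wedgeDensity hcomp hconv hK0).comp
      (continuous_add_const Θ)) (fun β => wedgeDensity_pos hcomp hconv hK0 _) hL
      (IsBisector.wedgeDensity_add hsym hΘ.2)
  have hΦ_eq : Φ' = π - Ψ := by
    have hL : IsBisector (fun α => radial K (sphP (0 + π - α) Θ) ^ 2) 0 π Φ' := by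
      simpa only [IsBisector, radial_image_rotX_sphP, show 0 - (π - Θ) = Θ - π by ring,
        radial_sphP_sub_pi hsym, zero_add] using hΦ'.2
    refine (IsBisector.unique ?_ (fun α => pow_pos (hρ_pos _ _) 2) hL
      (IsBisector.comp_sub_left (f := fun α => radial K (sphP α Θ) ^ 2) hΨ.2)).trans
      (by ring)
    exact (continuous_radial_sphP hcomp hconv hK0 (by fun_prop) continuous_const).pow 2
  have hΨ_eq : Ψ' = Φ := by
    have hL : IsBisector (fun α => radial K (sphP α 0) ^ 2) 0 π Ψ' := by
      simpa only [IsBisector, radial_image_rotX_sphP, hΘ_eq, sub_self] using hΨ'.2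
    exact IsBisector.unique
      ((continuous_radial_sphP hcomp hconv hK0 continuous_id continuous_const).pow 2)
      (fun α => pow_pos (hρ_pos _ _) 2) hL hΦ.2
  exact ⟨hΘ_eq, hΦ_eq, hΨ_eq⟩
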